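/- arXiv:1803.10968 — 2 statements merged into one kernel-verified Lean document; each statement's English description precedes it below -/
import Mathlib

section
/- Every point of the totally positive Grassmannian $Gr^{TP}(2,4)$ has a unique representative of the stated reduced row echelon form: if $A$ is a real $2\times 4$ matrix all of whose $2\times 2$ maximal minors are strictly positive, then there exists a unique invertible $2\times 2$ real matrix $g$ and unique positive reals $w_{13}, w_{14}, w_{23}, w_{24}$ such that $gA$ has rows $(1, 0, -w_{13}, -w_{13}(w_{14}+w_{24}))$ and $(0, 1, w_{23}, w_{23}w_{24})$. -/
/-- Maximal minor of a `2 × 4` real matrix formed by columns `i` and `j`. -/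
noncomputable def minor2 (A : Matrix (Fin 2) (Fin 4) ℝ) (i j : Fin 4) : ℝ :=
  Matrix.det !![A 0 i, A 0 j; A 1 i, A 1 j]

/-!
Write `A₁₂` for the first two columns of `A`; its determinant is the minor `Δ₁₂ > 0`, so `A₁₂` is
invertible. A matrix `g` brings `A` to the echelon form exactly when `g A₁₂ = 1`, which forces
`g = A₁₂⁻¹`. The matrix `A₁₂⁻¹ A = [1 0 x y; 0 1 z t]` has minors `Δᵢⱼ(A) / Δ₁₂(A) > 0`, namely
`z, t, -x, -y, xt - yz`, and these signs are exactly what is needed to solve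
`x = -w₁₃`, `y = -w₁₃ (w₁₄ + w₂₄)`, `z = w₂₃`, `t = w₂₃ w₂₄` in positive reals.
-/

open Matrix

theorem minor2_eq_det_submatrix (A : Matrix (Fin 2) (Fin 4) ℝ) (i j : Fin 4) :
    minor2 A i j = (A.submatrix id ![i, j]).det := by
  simp [minor2, det_fin_two]

theorem submatrix_id_mul {m n k α : Type*} [Fintype m] [Mul α] [AddCommMonoid α]
    (g : Matrix m m α) (A : Matrix m n α) (f : k → n) :
    (g * A).submatrix id f = g * A.submatrix id f := by
  simpa using submatrix_mul g A id id f Function.bijective_id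

theorem minor2_mul (g : Matrix (Fin 2) (Fin 2) ℝ) (A : Matrix (Fin 2) (Fin 4) ℝ) (i j : Fin 4) :
    minor2 (g * A) i j = g.det * minor2 A i j := by
  rw [minor2_eq_det_submatrix, minor2_eq_det_submatrix, submatrix_id_mul, det_mul]

def echelonTP (w₁₃ w₁₄ w₂₃ w₂₄ : ℝ) : Matrix (Fin 2) (Fin 4) ℝ :=
  !![1, 0, -w₁₃, -w₁₃ * (w₁₄ + w₂₄); 0, 1, w₂₃, w₂₃ * w₂₄]

theorem echelonTP_submatrix_eq_one (a b c d : ℝ) :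
    (echelonTP a b c d).submatrix id ![0, 1] = 1 := by
  ext i j
  fin_cases i <;> fin_cases j <;> rfl

theorem echelonTP_injective {a b c d a' b' c' d' : ℝ} (ha : a ≠ 0) (hc : c ≠ 0)
    (h : echelonTP a b c d = echelonTP a' b' c' d') :
    a = a' ∧ b = b' ∧ c = c' ∧ d = d' := by
  have h02 := congrFun (congrFun h 0) 2
  have h03 := congrFun (congrFun h 0) 3
  have h12 := congrFun (congrFun h 1) 2
  have h13 := congrFun (congrFun h 1) 3
  simp only [echelonTP, of_apply, cons_val', cons_val, empty_val', cons_val_fin_one,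
    neg_inj] at h02 h03 h12 h13
  subst h02 h12
  obtain rfl : d = d' := mul_left_cancel₀ hc h13
  obtain rfl : b = b' := by simpa [ha] using h03
  exact ⟨rfl, rfl, rfl, rfl⟩

theorem exists_eq_echelonTP {B : Matrix (Fin 2) (Fin 4) ℝ} (hB : B.submatrix id ![0, 1] = 1)
    (hpos : ∀ i j : Fin 4, i < j → 0 < minor2 B i j) :
    ∃ a b c d : ℝ, 0 < a ∧ 0 < b ∧ 0 < c ∧ 0 < d ∧ B = echelonTP a b c d := by
  have hB' i j := congrFun (congrFun hB i) j
  simp only [Fin.forall_fin_two, submatrix_apply, id, cons_val_zero, cons_val_one,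
    one_apply_eq, ne_eq, zero_ne_one, one_ne_zero, not_false_eq_true, one_apply_ne] at hB'
  obtain ⟨⟨h00, h01⟩, h10, h11⟩ := hB'
  have hmin : ∀ i j : Fin 4, i < j → 0 < B 0 i * B 1 j - B 0 j * B 1 i := fun i j hij => by
    simpa [minor2, det_fin_two_of] using hpos i j hij
  have hz : 0 < B 1 2 := by simpa [h00, h10] using hmin 0 2 (by decide)
  have ht : 0 < B 1 3 := by simpa [h00, h10] using hmin 0 3 (by decide)
  have hx : 0 < -B 0 2 := by simpa [h01, h11] using hmin 1 2 (by decide)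
  have hxt : 0 < B 0 2 * B 1 3 - B 0 3 * B 1 2 := hmin 2 3 (by decide)
  have hx0 : B 0 2 ≠ 0 := by linarith
  refine ⟨-B 0 2, (B 0 2 * B 1 3 - B 0 3 * B 1 2) / (-B 0 2 * B 1 2), B 1 2, B 1 3 / B 1 2,
    hx, by positivity, hz, by positivity, ?_⟩
  ext i j
  fin_cases i <;> fin_cases j <;> simp [echelonTP, h00, h01, h10, h11] <;> field_simp
  ring

theorem stmt1 (A : Matrix (Fin 2) (Fin 4) ℝ)
    (hA : ∀ i j : Fin 4, i < j → 0 < minor2 A i j) :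
    ∃! q : (GL (Fin 2) ℝ) × ℝ × ℝ × ℝ × ℝ,
      0 < q.2.1 ∧ 0 < q.2.2.1 ∧ 0 < q.2.2.2.1 ∧ 0 < q.2.2.2.2 ∧
      (q.1 : Matrix (Fin 2) (Fin 2) ℝ) * A =
        !![1, 0, -q.2.1, -q.2.1 * (q.2.2.1 + q.2.2.2.2);
           0, 1, q.2.2.2.1, q.2.2.2.1 * q.2.2.2.2] := by
  set M := A.submatrix id ![0, 1]
  have hM : 0 < M.det := by simpa [minor2_eq_det_submatrix] using hA 0 1 (by decide)
  have hMu : IsUnit M.det := isUnit_iff_ne_zero.2 hM.ne'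
  set g : GL (Fin 2) ℝ := (nonsingInvUnit M hMu)⁻¹
  have hg : (g : Matrix (Fin 2) (Fin 2) ℝ) = M⁻¹ := rfl
  have hgA : ((g : Matrix (Fin 2) (Fin 2) ℝ) * A).submatrix id ![0, 1] = 1 := by
    rw [submatrix_id_mul, hg, nonsing_inv_mul _ hMu]
  have hpos : ∀ i j : Fin 4, i < j → 0 < minor2 ((g : Matrix (Fin 2) (Fin 2) ℝ) * A) i j := by
    intro i j hij
    rw [minor2_mul, hg, det_nonsing_inv, Ring.inverse_eq_inv']
    exact mul_pos (inv_pos.2 hM) (hA i j hij)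
  obtain ⟨a, b, c, d, ha, hb, hc, hd, hE⟩ := exists_eq_echelonTP hgA hpos
  refine ⟨(g, a, b, c, d), ⟨ha, hb, hc, hd, hE⟩, ?_⟩
  rintro ⟨g', a', b', c', d'⟩ ⟨-, -, -, -, hE'⟩
  change (g' : Matrix (Fin 2) (Fin 2) ℝ) * A = echelonTP a' b' c' d' at hE'
  have hg' : g' = g := by
    refine Units.ext (hg ▸ (inv_eq_left_inv ?_).symm)
    rw [← submatrix_id_mul, hE', echelonTP_submatrix_eq_one]
  subst hg'
  obtain ⟨rfl, rfl, rfl, rfl⟩ := echelonTP_injective ha.ne' hc.ne' (hE.symm.trans hE')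
  rfl
end

section
/- Let $\kappa_1 < \cdots < \kappa_n$ be real and let $A$ be a real $k\times n$ matrix of rank $k$ all of whose maximal minors are nonnegative. Then the tau function $\tau(x,y,t) = \sum_{1\le j_1<\cdots<j_k\le n} \Delta_{(j_1,\dots,j_k)}(A)\, \prod_{r<s}(\kappa_{j_s}-\kappa_{j_r})\, \prod_{l=1}^k \exp(\kappa_{j_l} x + \kappa_{j_l}^2 y + \kappa_{j_l}^3 t)$ is strictly positive for all real $(x,y,t)$. -/
/-!
Every term of the sum is a product of a nonnegative maximal minor, a Vandermonde factor that is
positive because `κ` is strictly increasing, and exponentials. Since `A` has full row rank, some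
choice of `k` columns is linearly independent; after sorting them, the corresponding maximal minor
is nonzero, hence positive, so that term is strictly positive.
-/

open Matrix

theorem Matrix.exists_det_submatrix_ne_zero_of_rank_eq_card {K m n : Type*} [Field K] [Fintype m]
    [DecidableEq m] [Fintype n] (A : Matrix m n K) (hA : A.rank = Fintype.card m) :
    ∃ J : m → n, (A.submatrix id J).det ≠ 0 := by
  obtain ⟨ι, a, -, hspan, hli⟩ := exists_linearIndependent' K A.col
  have hspan_top : Submodule.span K (Set.range A.col) = ⊤ :=
    Submodule.eq_top_of_finrank_eq <| by
      rw [← rank_eq_finrank_span_cols, hA, Module.finrank_fintype_fun_eq_card]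
  let b : Module.Basis ι K (m → K) := .mk hli (by rw [hspan, hspan_top])
  let e : m ≃ ι := (Pi.basisFun K m).indexEquiv b
  have hunit : IsUnit (A.submatrix id (a ∘ e)) :=
    linearIndependent_cols_iff_isUnit.mp (hli.comp e e.injective)
  exact ⟨a ∘ e, ((isUnit_iff_isUnit_det _).mp hunit).ne_zero⟩

theorem Matrix.injective_of_det_submatrix_ne_zero {R m n : Type*} [CommRing R] [Fintype m]
    [DecidableEq m] {A : Matrix m n R} {J : m → n} (hJ : (A.submatrix id J).det ≠ 0) :
    Function.Injective J := by
  intro i j hij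
  by_contra hne
  exact hJ (det_zero_of_column_eq hne fun l => by simp [hij])

/-- Sorting the columns changes a minor only by a sign. -/
theorem Matrix.exists_strictMono_det_submatrix_ne_zero {R n : Type*} [CommRing R] [LinearOrder n]
    {k : ℕ} (A : Matrix (Fin k) n R) {J : Fin k → n} (hJ : (A.submatrix id J).det ≠ 0) :
    ∃ J' : Fin k → n, StrictMono J' ∧ (A.submatrix id J').det ≠ 0 := by
  set σ := Tuple.sort J
  have hdet : (A.submatrix id (J ∘ σ)).det = Equiv.Perm.sign σ * (A.submatrix id J).det :=
    det_permute' σ (A.submatrix id J)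
  have hdet_ne : (A.submatrix id (J ∘ σ)).det ≠ 0 := by
    rcases Int.units_eq_one_or (Equiv.Perm.sign σ) with h | h <;> simp [hdet, h, hJ]
  refine ⟨J ∘ σ, ?_, hdet_ne⟩
  exact (Tuple.monotone_sort J).strictMono_of_injective
    (injective_of_det_submatrix_ne_zero hdet_ne)

theorem prod_sub_pos_of_strictMono {α : Type*} [LinearOrder α] {f : α → ℝ} (hf : StrictMono f)
    (s : Finset (α × α)) (hs : ∀ p ∈ s, p.1 < p.2) :
    0 < ∏ p ∈ s, (f p.2 - f p.1) :=
  Finset.prod_pos fun p hp => sub_pos.mpr (hf (hs p hp))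

theorem stmt5_general (k n : ℕ) (κ : Fin n → ℝ) (hκ : StrictMono κ)
    (A : Matrix (Fin k) (Fin n) ℝ) (hrank : A.rank = k)
    (hminors : ∀ J : Fin k → Fin n, (∀ a b : Fin k, a < b → J a < J b) →
      0 ≤ Matrix.det (Matrix.of fun i l : Fin k => A i (J l)))
    (x y t : ℝ) :
    0 < ∑ J ∈ Finset.univ.filter
          (fun J : Fin k → Fin n => ∀ a b : Fin k, a < b → J a < J b),
        Matrix.det (Matrix.of fun i l : Fin k => A i (J l)) *
          (∏ p ∈ Finset.univ.filter (fun p : Fin k × Fin k => p.1 < p.2),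
            (κ (J p.2) - κ (J p.1))) *
          ∏ l, Real.exp (κ (J l) * x + κ (J l) ^ 2 * y + κ (J l) ^ 3 * t) := by
  obtain ⟨J, hJ⟩ := A.exists_det_submatrix_ne_zero_of_rank_eq_card (by simpa using hrank)
  obtain ⟨J₀, hJ₀, hJ₀det⟩ := A.exists_strictMono_det_submatrix_ne_zero hJ
  have hvand : ∀ J : Fin k → Fin n, StrictMono J →
      0 < ∏ p ∈ Finset.univ.filter (fun p : Fin k × Fin k => p.1 < p.2),
        (κ (J p.2) - κ (J p.1)) := fun J hJ =>
    prod_sub_pos_of_strictMono (hκ.comp hJ) _ fun p hp => (Finset.mem_filter.mp hp).2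
  have hexp : ∀ J : Fin k → Fin n,
      0 < ∏ l, Real.exp (κ (J l) * x + κ (J l) ^ 2 * y + κ (J l) ^ 3 * t) :=
    fun J => Finset.prod_pos fun l _ => Real.exp_pos _
  refine Finset.sum_pos' (fun J hmem => ?_) ⟨J₀, ?_, ?_⟩
  · have hmono : StrictMono J := fun a b => (Finset.mem_filter.mp hmem).2 a b
    exact mul_nonneg (mul_nonneg (hminors J fun a b h => hmono h) (hvand J hmono).le) (hexp J).le
  · exact Finset.mem_filter.mpr ⟨Finset.mem_univ _, fun a b h => hJ₀ h⟩
  · have hminor_pos := (hminors J₀ fun a b h => hJ₀ h).lt_of_ne' hJ₀det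
    exact mul_pos (mul_pos hminor_pos (hvand J₀ hJ₀)) (hexp J₀)

theorem stmt5 (k n : ℕ) (hkn : k ≤ n) (κ : Fin n → ℝ) (hκ : StrictMono κ)
    (A : Matrix (Fin k) (Fin n) ℝ) (hrank : A.rank = k)
    (hminors : ∀ J : Fin k → Fin n, (∀ a b : Fin k, a < b → J a < J b) →
      0 ≤ Matrix.det (Matrix.of fun i l : Fin k => A i (J l)))
    (x y t : ℝ) :
    0 < ∑ J ∈ Finset.univ.filter
          (fun J : Fin k → Fin n => ∀ a b : Fin k, a < b → J a < J b),
        Matrix.det (Matrix.of fun i l : Fin k => A i (J l)) *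
          (∏ p ∈ Finset.univ.filter (fun p : Fin k × Fin k => p.1 < p.2),
            (κ (J p.2) - κ (J p.1))) *
          ∏ l, Real.exp (κ (J l) * x + κ (J l) ^ 2 * y + κ (J l) ^ 3 * t) :=
  stmt5_general k n κ hκ A hrank hminors x y t
end
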